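/- arXiv:2004.10050 — 2 statements merged into one kernel-verified Lean document; each statement's English description precedes it below -/
import Mathlib

section
/- Fix constants ρ ∈ (0,1) and c > 0. Define the backward recursion Q_T = 1 and Q_t = 1 + ρ·Q_{t+1}/(1 + ρ·c·Q_{t+1}) for t < T. Then the sequence (Q_{T}, Q_{T-1}, …, Q_0) is strictly increasing in reverse time order (i.e., Q_t > Q_{t+1} for all t < T) and bounded above by 1 + 1/c. -/
/-- The backward Riccati-type recursion `Q_T = 1`,
`Q_t = 1 + ρ·Q_{t+1}/(1 + ρ·c·Q_{t+1})` is strictly increasing in reverse time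
order and bounded above by `1 + 1/c`. -/
theorem stmt_2 (ρ c : ℝ) (hρ : ρ ∈ Set.Ioo (0 : ℝ) 1) (hc : 0 < c)
    (T : ℕ) (Q : ℕ → ℝ) (hQT : Q T = 1)
    (hrec : ∀ t < T, Q t = 1 + ρ * Q (t + 1) / (1 + ρ * c * Q (t + 1))) :
    (∀ t < T, Q t > Q (t + 1)) ∧ (∀ t ≤ T, Q t ≤ 1 + 1 / c) := by
  obtain ⟨hρ0, hρ1⟩ := hρ
  -- lower bound Q t ≥ 1 by backward induction
  have hpos : ∀ d, d ≤ T → 1 ≤ Q (T - d) := by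
    intro d
    induction d with
    | zero => intro _; simp [hQT]
    | succ n ih =>
      intro h
      have h1 : 1 ≤ Q (T - n) := ih (by omega)
      have ht : T - (n + 1) < T := by omega
      have hsucc : T - (n + 1) + 1 = T - n := by omega
      have := hrec (T - (n + 1)) ht
      rw [hsucc] at this
      have hden : 0 < 1 + ρ * c * Q (T - n) := by
        nlinarith [mul_pos (mul_pos hρ0 hc) (show (0:ℝ) < Q (T - n) by linarith)]
      have h2 : 0 ≤ ρ * Q (T - n) / (1 + ρ * c * Q (T - n)) :=
        div_nonneg (by nlinarith) hden.le
      linarith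
  have hpos' : ∀ t, t ≤ T → 1 ≤ Q t := by
    intro t ht
    have : T - (T - t) = t := by omega
    rw [← this]; exact hpos (T - t) (by omega)
  -- strict monotonicity of the map
  have hmono : ∀ x y : ℝ, 1 ≤ x → x < y →
      ρ * x / (1 + ρ * c * x) < ρ * y / (1 + ρ * c * y) := by
    intro x y hx hxy
    have hdx : 0 < 1 + ρ * c * x := by
      nlinarith [mul_pos (mul_pos hρ0 hc) (show (0:ℝ) < x by linarith)]
    have hdy : 0 < 1 + ρ * c * y := by
      nlinarith [mul_pos (mul_pos hρ0 hc) (show (0:ℝ) < y by linarith)]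
    rw [div_lt_div_iff₀ hdx hdy]
    nlinarith
  -- decrease
  have hdec : ∀ t < T, Q (t + 1) < Q t := by
    intro t ht
    -- induction on T - t - 1
    have key : ∀ d, d < T → Q (T - d) < Q (T - d - 1) := by
      intro d
      induction d with
      | zero =>
        intro h
        have ht1 : T - 1 < T := by omega
        have hs : T - 1 + 1 = T := by omega
        have := hrec (T - 1) ht1
        rw [hs, hQT] at this
        have hden : 0 < 1 + ρ * c * 1 := by nlinarith
        have : Q (T - 1) = 1 + ρ * 1 / (1 + ρ * c * 1) := this
        have hpos2 : 0 < ρ * 1 / (1 + ρ * c * 1) := div_pos (by nlinarith) hden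
        simp only [Nat.sub_zero, hQT]
        linarith
      | succ n ih =>
        intro h
        have ihn := ih (by omega)
        have ha : T - (n + 1) < T := by omega
        have hb : T - (n + 1) - 1 < T := by omega
        have e1 : T - (n + 1) + 1 = T - n := by omega
        have e2 : T - (n + 1) - 1 + 1 = T - (n + 1) := by omega
        have r1 := hrec (T - (n + 1)) ha
        have r2 := hrec (T - (n + 1) - 1) hb
        rw [e1] at r1
        rw [e2] at r2
        have h1 : 1 ≤ Q (T - (n + 1)) := hpos' _ (by omega)
        have hlt : Q (T - (n + 1)) < Q (T - (n + 1) - 1) := by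
          rw [r1, r2]
          have e3 : T - (n + 1) = T - n - 1 := by omega
          have := hmono (Q (T - n)) (Q (T - n - 1)) (hpos' _ (by omega)) (e3 ▸ ihn)
          rw [← e3] at this
          linarith
        exact hlt
    have hd : T - (T - t - 1) = t + 1 := by omega
    have hd2 : T - (T - t - 1) - 1 = t := by omega
    have := key (T - t - 1) (by omega)
    rw [hd] at this
    simpa using this
  refine ⟨fun t ht => hdec t ht, fun t ht => ?_⟩
  rcases eq_or_lt_of_le ht with heq | hlt
  · subst heq
    rw [hQT]
    have : 0 ≤ 1 / c := by positivity
    linarith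
  · have r := hrec t hlt
    have h1 : 1 ≤ Q (t + 1) := hpos' _ (by omega)
    have hden : 0 < 1 + ρ * c * Q (t + 1) := by
      nlinarith [mul_pos (mul_pos hρ0 hc) (show (0:ℝ) < Q (t + 1) by linarith)]
    have hb : ρ * Q (t + 1) / (1 + ρ * c * Q (t + 1)) ≤ 1 / c := by
      rw [div_le_div_iff₀ hden hc]
      nlinarith
    rw [r]; linarith
end

section
/- Fix ρ ∈ (0,1), α > 0, b > 0, A₀ ≥ 0 small (specifically with v(0) < 1 where v is defined below). For δ ≥ 0 let Q(δ) be the unique positive root of ρc(δ)Q² + (1-ρ-ρc(δ))Q - 1 = 0 where c(δ) = α(δ+1)²/b, and define v(δ) = ρQ(δ)c(δ)(δ+A₀)(1-ρ+ρQ(δ)c(δ)) / ((1-ρ)(1+ρQ(δ)c(δ))). Then v is continuous and strictly increasing on [0,∞), v(δ) → ∞ as δ → ∞, and hence the equation v(δ) = 1 has a unique solution δ* > 0. -/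
/-!
The quadratic defining `Q` says exactly `ρQc · (1 - ρ + ρQc) = ρc · (1 + ρQc)`, so the factor
`Q` cancels from `v` and `v(δ) = ρα(δ+1)²(δ+A₀) / (b(1-ρ))`, a positive multiple of a cubic
which is continuous, strictly increasing on `[0, ∞)` and unbounded. Existence and uniqueness of
the solution of `v δ = 1` then follow from the intermediate value theorem and injectivity.
-/

open Filter Set

theorem mul_add_mul_eq_of_quadratic_root {ρ c Q : ℝ}
    (h : ρ * c * Q ^ 2 + (1 - ρ - ρ * c) * Q - 1 = 0) :
    ρ * Q * c * (1 - ρ + ρ * Q * c) = ρ * c * (1 + ρ * Q * c) := by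
  linear_combination (ρ * c) * h

theorem div_eq_of_quadratic_root {ρ c Q x : ℝ} (hρ : 1 - ρ ≠ 0) (hQc : 1 + ρ * Q * c ≠ 0)
    (h : ρ * c * Q ^ 2 + (1 - ρ - ρ * c) * Q - 1 = 0) :
    ρ * Q * c * x * (1 - ρ + ρ * Q * c) / ((1 - ρ) * (1 + ρ * Q * c)) = ρ * c * x / (1 - ρ) := by
  rw [div_eq_div_iff (mul_ne_zero hρ hQc) hρ]
  linear_combination ((1 - ρ) * x) * mul_add_mul_eq_of_quadratic_root h

theorem strictMonoOn_add_one_sq_mul_add {a : ℝ} (ha : 0 ≤ a) :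
    StrictMonoOn (fun x : ℝ => (x + 1) ^ 2 * (x + a)) (Ici 0) := by
  intro x (hx : 0 ≤ x) y (_ : 0 ≤ y) hxy
  have hsq : (x + 1) ^ 2 < (y + 1) ^ 2 := by gcongr
  calc (x + 1) ^ 2 * (x + a) ≤ (x + 1) ^ 2 * (y + a) := by gcongr
    _ < (y + 1) ^ 2 * (y + a) := by gcongr; linarith

theorem tendsto_add_one_sq_mul_add_atTop (a : ℝ) :
    Tendsto (fun x : ℝ => (x + 1) ^ 2 * (x + a)) atTop atTop :=
  ((tendsto_pow_atTop two_ne_zero).comp (tendsto_atTop_add_const_right _ 1 tendsto_id)).atTop_mul_atTop₀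
    (tendsto_atTop_add_const_right _ a tendsto_id)

theorem StrictMonoOn.existsUnique_gt_eq_of_tendsto {α β : Type*}
    [ConditionallyCompleteLinearOrder α] [TopologicalSpace α] [OrderTopology α] [DenselyOrdered α]
    [LinearOrder β] [TopologicalSpace β] [OrderClosedTopology β]
    {f : α → β} {a : α} {y : β} (hmono : StrictMonoOn f (Ici a)) (hcont : ContinuousOn f (Ici a))
    (htop : Tendsto f atTop atTop) (hy : f a < y) :
    ∃! x, a < x ∧ f x = y := by
  obtain ⟨x, hax : a ≤ x, hfx⟩ := intermediate_value_Ici hcont htop hy.le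
  have hax' : a < x := hax.lt_of_ne (by rintro rfl; exact hy.ne hfx)
  refine ⟨x, ⟨hax', hfx⟩, fun x' ⟨hx', hfx'⟩ => ?_⟩
  exact hmono.injOn (mem_Ici.2 hx'.le) (mem_Ici.2 hax) (hfx'.trans hfx.symm)

/-- The infinite-horizon fixed-point equation `v(δ) = 1` for the time-average
age-reduction estimator has a unique positive solution: with
`c(δ) = α(δ+1)²/b`, `Q(δ)` the unique positive root of
`ρc(δ)Q² + (1-ρ-ρc(δ))Q - 1 = 0`, and
`v(δ) = ρQ(δ)c(δ)(δ+A₀)(1-ρ+ρQ(δ)c(δ))/((1-ρ)(1+ρQ(δ)c(δ)))`,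
`v` is continuous and strictly increasing on `[0,∞)`, tends to `∞`, and
(assuming `v 0 < 1`) the equation `v δ = 1` has a unique solution `δ* > 0`. -/
theorem stmt_9 (ρ α b A₀ : ℝ) (hρ : ρ ∈ Set.Ioo (0 : ℝ) 1) (hα : 0 < α)
    (hb : 0 < b) (hA₀ : 0 ≤ A₀)
    (c Q v : ℝ → ℝ)
    (hc : ∀ δ : ℝ, c δ = α * (δ + 1) ^ 2 / b)
    (hQ : ∀ δ : ℝ, 0 ≤ δ →
      0 < Q δ ∧ ρ * c δ * Q δ ^ 2 + (1 - ρ - ρ * c δ) * Q δ - 1 = 0)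
    (hv : ∀ δ : ℝ, v δ = ρ * Q δ * c δ * (δ + A₀) * (1 - ρ + ρ * Q δ * c δ) /
      ((1 - ρ) * (1 + ρ * Q δ * c δ)))
    (hv0 : v 0 < 1) :
    ContinuousOn v (Set.Ici 0) ∧ StrictMonoOn v (Set.Ici 0) ∧
      Tendsto v atTop atTop ∧
      ∃! δstar : ℝ, 0 < δstar ∧ v δstar = 1 := by
  obtain ⟨hρ0, hρ1⟩ := hρ
  have hK : 0 < ρ * α / (b * (1 - ρ)) := by have := sub_pos.2 hρ1; positivity
  set g : ℝ → ℝ := fun δ => ρ * α / (b * (1 - ρ)) * ((δ + 1) ^ 2 * (δ + A₀))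
  have hvg : EqOn v g (Ici 0) := by
    intro δ (hδ : 0 ≤ δ)
    obtain ⟨hQδ, hroot⟩ := hQ δ hδ
    have hcδ : 0 < c δ := by rw [hc]; positivity
    rw [hv, div_eq_of_quadratic_root (sub_pos.2 hρ1).ne' (by positivity) hroot, hc]
    simp only [g]
    field_simp
  have hcont : ContinuousOn v (Ici 0) := (by fun_prop : Continuous g).continuousOn.congr hvg
  have hmono : StrictMonoOn v (Ici 0) :=
    ((strictMono_mul_left_of_pos hK).comp_strictMonoOn
      (strictMonoOn_add_one_sq_mul_add hA₀)).congr hvg.symm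
  have htop : Tendsto v atTop atTop :=
    ((tendsto_add_one_sq_mul_add_atTop A₀).const_mul_atTop hK).congr'
      (eventuallyEq_of_mem (Ici_mem_atTop 0) hvg.symm)
  exact ⟨hcont, hmono, htop, hmono.existsUnique_gt_eq_of_tendsto hcont htop hv0⟩
end
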